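/- Let P be a nilpotent Poisson algebra of dimension n over an arbitrary field with p ≠ 2. If P has an abelian subalgebra of dimension n−2 and no abelian subalgebra of dimension n−1, then P has an abelian ideal of dimension n−2. -/

import Mathlib

variable {F : Type*} [Field F] {P : Type*} [AddCommGroup P] [Module F P]

/-- A subalgebra of a dialgebra (subspace closed under both products). -/
def IsSubalg (mul br : P →ₗ[F] P →ₗ[F] P) (A : Submodule F P) : Prop :=
  ∀ x ∈ A, ∀ y ∈ A, mul x y ∈ A ∧ br x y ∈ A

/-- An ideal of a dialgebra. -/
def IsIdeal (mul br : P →ₗ[F] P →ₗ[F] P) (A : Submodule F P) : Prop :=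
  ∀ x ∈ A, ∀ y : P, mul x y ∈ A ∧ mul y x ∈ A ∧ br x y ∈ A ∧ br y x ∈ A

/-- An abelian subspace: all products of its elements vanish. -/
def IsAbelian (mul br : P →ₗ[F] P →ₗ[F] P) (A : Submodule F P) : Prop :=
  ∀ x ∈ A, ∀ y ∈ A, mul x y = 0 ∧ br x y = 0

/-- span of all products `f a b` with `a ∈ A`, `b ∈ B`. -/
def prodSpan (f : P →ₗ[F] P →ₗ[F] P) (A B : Submodule F P) : Submodule F P :=
  Submodule.span F {z | ∃ a ∈ A, ∃ b ∈ B, z = f a b}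

/-- Lower central series of a Poisson algebra:
`P^(0) = P`, `P^(k+1) = P^(k)·P + [P^(k),P]`. -/
def lcsP (mul br : P →ₗ[F] P →ₗ[F] P) : ℕ → Submodule F P
  | 0 => ⊤
  | (k + 1) => prodSpan mul (lcsP mul br k) ⊤ ⊔ prodSpan br (lcsP mul br k) ⊤

/-!
Let `N` be the idealizer of `A`, the elements `y` with `y A ⊆ A` and `[y, A] ⊆ A`; by the Leibniz
rule and the Jacobi identity it is a subalgebra. In a nilpotent algebra every proper subalgebra is
strictly contained in its idealizer, so `A < N`, and `A` itself is the ideal if `N = P`. Otherwise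
`N` has codimension one, so it is an ideal too, and `N = A + F u` for every `u ∈ N \ A`.

Fix `x ∉ N`. Since `A` is a maximal abelian subspace, `x A ⊆ A`, so `u = [x, a₀] ∉ A` for some
`a₀ ∈ A`. Writing `[x, a] ≡ φ(a) u (mod A)`, one finds `u A = 0`, `u² = 0` and
`[u, a] = φ(a) e` with `e = [u, a₀]`, and maximality of `A` again gives `e ≠ 0`. The operators
`ad x`, `(ad x)²` and `L_x` are nilpotent, which kills the eigenvalues in `[x, e] = ε e` (where
`[x, u] ≡ ε u`), `[x, [x, u]] ≡ c u` and `x u ≡ δ u` (mod `A`). Then `I = ker φ + F u` is an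
abelian ideal with `dim I = dim A`.
-/

open Submodule Module

section LinearAlgebra

variable {A W : Submodule F P}

theorem mem_sup_span_singleton_iff {u z : P} :
    z ∈ A ⊔ span F {u} ↔ ∃ c : F, z - c • u ∈ A := by
  simp only [mem_sup, mem_span_singleton]
  constructor
  · rintro ⟨a, ha, _, ⟨c, rfl⟩, rfl⟩
    exact ⟨c, by simpa using ha⟩
  · rintro ⟨c, hc⟩
    exact ⟨_, hc, c • u, ⟨c, rfl⟩, sub_add_cancel z _⟩

theorem sup_span_singleton_eq_of_finrank_eq [FiniteDimensional F P] {N : Submodule F P}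
    (hAN : A ≤ N) {v : P} (hvN : v ∈ N) (hvA : v ∉ A)
    (h : finrank F N = finrank F A + 1) : A ⊔ span F {v} = N :=
  eq_of_le_of_finrank_eq (sup_le hAN ((span_singleton_le_iff_mem _ _).2 hvN))
    (by rw [finrank_sup_span_singleton hvA, h])

theorem eq_top_of_lt_of_finrank_add_one [FiniteDimensional F P] {N : Submodule F P}
    (hAN : A < N) (h : finrank F A + 1 = finrank F P) : N = ⊤ :=
  eq_top_of_finrank_eq (le_antisymm (finrank_le N) (h ▸ finrank_lt_finrank_of_lt hAN))

theorem inf_comap_sup_span_singleton_eq {θ : P →ₗ[F] P} {a₀ : P} (ha₀ : a₀ ∈ A)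
    (h : ∀ a ∈ A, θ a ∈ A ⊔ span F {θ a₀}) : A ⊓ A.comap θ ⊔ span F {a₀} = A := by
  refine le_antisymm (sup_le inf_le_left ((span_singleton_le_iff_mem _ _).2 ha₀)) fun a ha => ?_
  obtain ⟨c, hc⟩ := mem_sup_span_singleton_iff.1 (h a ha)
  refine mem_sup_span_singleton_iff.2 ⟨c, sub_mem ha (smul_mem _ c ha₀), ?_⟩
  show θ (a - c • a₀) ∈ A
  rwa [map_sub, map_smul]

theorem eq_zero_of_isNilpotent_of_apply_sub_smul_mem {θ : Module.End F P} (hθ : IsNilpotent θ)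
    (hW : W ≤ W.comap θ) {v : P} (hv : v ∉ W) {c : F}
    (h : θ v - c • v ∈ W) : c = 0 := by
  have hθW : IsNilpotent (W.mapQ W θ hW) := by
    obtain ⟨k, hk⟩ := hθ
    exact ⟨k, by rw [← mapQ_pow]; ext; simp [hk]⟩
  have hvec : Module.End.HasEigenvector (W.mapQ W θ hW) c (W.mkQ v) := by
    refine Module.End.hasEigenvector_iff.2 ⟨Module.End.mem_eigenspace_iff.2 ?_, ?_⟩
    · simpa [← Quotient.mk_smul] using (Submodule.Quotient.eq W).2 h
    · simpa using hv
  exact ((Module.End.hasEigenvalue_of_hasEigenvector hvec).isNilpotent_of_isNilpotent hθW).eq_zero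

theorem apply_mem_of_isNilpotent {θ : Module.End F P} (hθ : IsNilpotent θ)
    (hW : W ≤ W.comap θ) {v : P} (hv : v ∉ W)
    (h : θ v ∈ W ⊔ span F {v}) : θ v ∈ W := by
  obtain ⟨c, hc⟩ := mem_sup_span_singleton_iff.1 h
  rwa [eq_zero_of_isNilpotent_of_apply_sub_smul_mem hθ hW hv hc, zero_smul, sub_zero] at hc

end LinearAlgebra

def idealizer (mul br : P →ₗ[F] P →ₗ[F] P) (A : Submodule F P) : Submodule F P where
  carrier := {y | ∀ a ∈ A, mul y a ∈ A ∧ br y a ∈ A}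
  add_mem' {y z} hy hz a ha := by
    simp only [map_add, LinearMap.add_apply]
    exact ⟨A.add_mem (hy a ha).1 (hz a ha).1, A.add_mem (hy a ha).2 (hz a ha).2⟩
  zero_mem' a ha := by simp
  smul_mem' c y hy a ha := by
    simp only [map_smul, LinearMap.smul_apply]
    exact ⟨A.smul_mem c (hy a ha).1, A.smul_mem c (hy a ha).2⟩

section Bilinear

variable {mul br : P →ₗ[F] P →ₗ[F] P} {A : Submodule F P}

theorem apply_eq_zero_of_mem_sup_span_singleton (f : P →ₗ[F] P →ₗ[F] P) {a u z : P}
    (hA : ∀ b ∈ A, f b a = 0) (hu : f u a = 0) (hz : z ∈ A ⊔ span F {u}) : f z a = 0 :=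
  LinearMap.mem_ker.1 <| (sup_le (fun b hb => LinearMap.mem_ker.2 (hA b hb))
    ((span_singleton_le_iff_mem _ _).2 (LinearMap.mem_ker.2 hu)) : _ ≤ LinearMap.ker (f.flip a)) hz

theorem IsAbelian.mono {B : Submodule F P} (hB : IsAbelian mul br B) (hAB : A ≤ B) :
    IsAbelian mul br A :=
  fun x hx y hy => hB x (hAB hx) y (hAB hy)

theorem IsAbelian.isSubalg (h : IsAbelian mul br A) : IsSubalg mul br A := fun x hx y hy => by
  rw [(h x hx y hy).1, (h x hx y hy).2]
  exact ⟨A.zero_mem, A.zero_mem⟩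

theorem IsSubalg.le_idealizer (h : IsSubalg mul br A) : A ≤ idealizer mul br A :=
  fun y hy a ha => h y hy a ha

theorem mem_idealizer_sup_span_singleton {u y : P}
    (hA : ∀ a ∈ A, mul y a ∈ A ⊔ span F {u} ∧ br y a ∈ A ⊔ span F {u})
    (hu : mul y u ∈ A ⊔ span F {u} ∧ br y u ∈ A ⊔ span F {u}) :
    y ∈ idealizer mul br (A ⊔ span F {u}) := by
  intro z hz
  obtain ⟨c, hc⟩ := mem_sup_span_singleton_iff.1 hz
  rw [← sub_add_cancel z (c • u), map_add, map_add, map_smul, map_smul]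
  exact ⟨add_mem (hA _ hc).1 (smul_mem _ c hu.1), add_mem (hA _ hc).2 (smul_mem _ c hu.2)⟩

theorem mul_mem_lcsP_succ {k : ℕ} {z : P} (hz : z ∈ lcsP mul br k) (y : P) :
    mul z y ∈ lcsP mul br (k + 1) :=
  mem_sup_left (subset_span ⟨z, hz, y, mem_top, rfl⟩)

theorem br_mem_lcsP_succ {k : ℕ} {z : P} (hz : z ∈ lcsP mul br k) (y : P) :
    br z y ∈ lcsP mul br (k + 1) :=
  mem_sup_right (subset_span ⟨z, hz, y, mem_top, rfl⟩)

theorem lcsP_le_idealizer {k : ℕ} (h : lcsP mul br (k + 1) ≤ A) :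
    lcsP mul br k ≤ idealizer mul br A :=
  fun _ hz a _ => ⟨h (mul_mem_lcsP_succ hz a), h (br_mem_lcsP_succ hz a)⟩

theorem exists_not_lcsP_le_lcsP_succ_le (hnil : ∃ m, lcsP mul br m = ⊥) (hA : A ≠ ⊤) :
    ∃ k, ¬ lcsP mul br k ≤ A ∧ lcsP mul br (k + 1) ≤ A := by
  classical
  have hex : ∃ m, lcsP mul br m ≤ A := hnil.imp fun m hm => by rw [hm]; exact bot_le
  obtain ⟨k, hk⟩ := Nat.exists_eq_add_one_of_ne_zero fun h : Nat.find hex = 0 =>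
    hA (top_le_iff.1 (by simpa [h, lcsP] using Nat.find_spec hex))
  exact ⟨k, Nat.find_min hex (by omega), hk ▸ Nat.find_spec hex⟩

theorem IsSubalg.lt_idealizer (hnil : ∃ m, lcsP mul br m = ⊥) (hA : IsSubalg mul br A)
    (hA_ne : A ≠ ⊤) : A < idealizer mul br A := by
  obtain ⟨k, hk, hk1⟩ := exists_not_lcsP_le_lcsP_succ_le hnil hA_ne
  exact lt_of_le_not_ge hA.le_idealizer fun h => hk ((lcsP_le_idealizer hk1).trans h)

theorem isNilpotent_of_mapsTo_lcsP (hnil : ∃ m, lcsP mul br m = ⊥) {θ : Module.End F P}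
    (hθ : ∀ k, ∀ z ∈ lcsP mul br k, θ z ∈ lcsP mul br (k + 1)) : IsNilpotent θ := by
  obtain ⟨m, hm⟩ := hnil
  have hpow : ∀ k z, (θ ^ k) z ∈ lcsP mul br k := by
    intro k z
    induction k with
    | zero => exact mem_top
    | succ k ih => rw [pow_succ', Module.End.mul_apply]; exact hθ k _ ih
  exact ⟨m, LinearMap.ext fun z => by simpa [hm] using hpow m z⟩

end Bilinear

structure IsPoisson (mul br : P →ₗ[F] P →ₗ[F] P) : Prop where
  mul_comm : ∀ x y, mul x y = mul y x
  mul_assoc : ∀ x y z, mul (mul x y) z = mul x (mul y z)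
  br_self : ∀ x, br x x = 0
  jacobi : ∀ x y z, br (br x y) z + br (br y z) x + br (br z x) y = 0
  leibniz : ∀ x y z, br (mul x y) z = mul (br x z) y + mul x (br y z)

namespace IsPoisson

variable {mul br : P →ₗ[F] P →ₗ[F] P} {A : Submodule F P}

theorem br_eq_neg (hP : IsPoisson mul br) (x y : P) : br x y = -br y x := by
  have h := hP.br_self (x + y)
  simp only [map_add, LinearMap.add_apply, hP.br_self, zero_add, add_zero] at h
  exact eq_neg_of_add_eq_zero_right h

theorem leibniz_br (hP : IsPoisson mul br) (x y z : P) :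
    br x (br y z) = br (br x y) z + br y (br x z) := by
  have h := hP.jacobi x y z
  rw [hP.br_eq_neg (br y z) x, hP.br_eq_neg (br z x) y, hP.br_eq_neg z x, map_neg, neg_neg] at h
  rw [← sub_eq_zero, ← neg_eq_zero, ← h]
  abel

theorem br_mul_self (hP : IsPoisson mul br) (x z : P) : br x (mul x z) = mul x (br x z) := by
  rw [hP.br_eq_neg, hP.leibniz, hP.br_self, map_zero, LinearMap.zero_apply, zero_add,
    hP.br_eq_neg z x, map_neg, neg_neg]

theorem isNilpotent_mul (hP : IsPoisson mul br) (hnil : ∃ m, lcsP mul br m = ⊥) (x : P) :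
    IsNilpotent (mul x) :=
  isNilpotent_of_mapsTo_lcsP hnil fun _ z hz => hP.mul_comm x z ▸ mul_mem_lcsP_succ hz x

theorem isNilpotent_br (hP : IsPoisson mul br) (hnil : ∃ m, lcsP mul br m = ⊥) (x : P) :
    IsNilpotent (br x) :=
  isNilpotent_of_mapsTo_lcsP hnil fun _ z hz => by
    rw [hP.br_eq_neg]
    exact neg_mem (br_mem_lcsP_succ hz x)

theorem isSubalg_idealizer (hP : IsPoisson mul br) (A : Submodule F P) :
    IsSubalg mul br (idealizer mul br A) := by
  intro y hy z hz
  refine ⟨fun a ha => ⟨?_, ?_⟩, fun a ha => ⟨?_, ?_⟩⟩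
  · rw [hP.mul_assoc]
    exact (hy _ (hz a ha).1).1
  · rw [hP.leibniz, hP.mul_comm (br y a)]
    exact add_mem (hz _ (hy a ha).2).1 (hy _ (hz a ha).2).1
  · rw [hP.mul_comm, eq_sub_of_add_eq' (hP.leibniz a y z).symm, hP.mul_comm a y,
      hP.br_eq_neg _ z, hP.mul_comm _ y, hP.br_eq_neg a z, map_neg]
    exact sub_mem (neg_mem (hz _ (hy a ha).1).2) (neg_mem (hy _ (hz a ha).2).1)
  · rw [eq_sub_of_add_eq (hP.leibniz_br y z a).symm]
    exact sub_mem (hy _ (hz a ha).2).2 (hz _ (hy a ha).2).2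

theorem isIdeal_of_idealizer_eq_top (hP : IsPoisson mul br) (h : idealizer mul br A = ⊤) :
    IsIdeal mul br A := by
  intro z hz y
  obtain ⟨h1, h2⟩ := (h ▸ mem_top : y ∈ idealizer mul br A) z hz
  refine ⟨hP.mul_comm z y ▸ h1, h1, ?_, h2⟩
  rw [hP.br_eq_neg]
  exact neg_mem h2

theorem isAbelian_sup_span_singleton (hP : IsPoisson mul br) (hA : IsAbelian mul br A) {v : P}
    (hvv : mul v v = 0) (hmul : ∀ a ∈ A, mul v a = 0) (hbr : ∀ a ∈ A, br v a = 0) :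
    IsAbelian mul br (A ⊔ span F {v}) := by
  intro z hz z' hz'
  obtain ⟨c, hc⟩ := mem_sup_span_singleton_iff.1 hz
  obtain ⟨c', hc'⟩ := mem_sup_span_singleton_iff.1 hz'
  rw [← sub_add_cancel z (c • v), ← sub_add_cancel z' (c' • v)]
  simp only [map_add, map_smul, LinearMap.add_apply, LinearMap.smul_apply, (hA _ hc _ hc').1,
    (hA _ hc _ hc').2, hmul _ hc', hbr _ hc', hP.mul_comm (z - c • v) v,
    hP.br_eq_neg (z - c • v) v, hmul _ hc, hbr _ hc, hvv, hP.br_self]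
  simp

theorem mul_mem_of_isIdeal_idealizer [FiniteDimensional F P] (hP : IsPoisson mul br)
    (hA : IsAbelian mul br A) (hmax : ∀ v ∉ A, ¬ IsAbelian mul br (A ⊔ span F {v}))
    (hNid : IsIdeal mul br (idealizer mul br A))
    (hNA : finrank F (idealizer mul br A) = finrank F A + 1) (x : P) {a' : P} (ha' : a' ∈ A) :
    mul x a' ∈ A := by
  by_contra hv
  set v := mul x a'
  have hAN : A ≤ idealizer mul br A := hA.isSubalg.le_idealizer
  have hNv : A ⊔ span F {v} = idealizer mul br A :=
    sup_span_singleton_eq_of_finrank_eq hAN (hNid a' (hAN ha') x).2.1 hv hNA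
  have hva : ∀ a ∈ A, mul v a = 0 := fun a ha => by
    rw [hP.mul_assoc, (hA a' ha' a ha).1, map_zero]
  have hvv : mul v v = 0 := by rw [hP.mul_assoc, hP.mul_comm a', hva a' ha', map_zero]
  -- `[x a', a] = [x, a] a'`, and `[x, a]` lies in `A + F v`, which `a'` annihilates
  have hbr : ∀ a ∈ A, br v a = 0 := fun a ha => by
    rw [hP.leibniz, (hA a' ha' a ha).2, map_zero, add_zero]
    exact apply_eq_zero_of_mem_sup_span_singleton mul (fun b hb => (hA b hb a' ha').1)
      (hva a' ha') (hNv ▸ (hNid a (hAN ha) x).2.2.2)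
  exact hmax v hv (hP.isAbelian_sup_span_singleton hA hvv hva hbr)

variable {x a₀ : P}

theorem mul_br_eq_zero (hP : IsPoisson mul br) (hA : IsAbelian mul br A) (ha₀ : a₀ ∈ A)
    {a : P} (ha : a ∈ A) (hxa : mul x a ∈ A) : mul (br x a₀) a = 0 := by
  have h := hP.leibniz a x a₀
  rw [hP.mul_comm a x, (hA _ hxa _ ha₀).2, (hA a ha a₀ ha₀).2, map_zero, LinearMap.zero_apply,
    zero_add] at h
  rw [hP.mul_comm, h]

theorem br_br_eq_smul (hP : IsPoisson mul br) (hA : IsAbelian mul br A) (ha₀ : a₀ ∈ A)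
    {a : P} (ha : a ∈ A) {c : F} (hc : br x a - c • br x a₀ ∈ A) :
    br (br x a₀) a = c • br (br x a₀) a₀ := by
  have h := hP.leibniz_br x a₀ a
  rw [(hA a₀ ha₀ a ha).2, map_zero, ← sub_add_cancel (br x a) (c • br x a₀), map_add, map_smul,
    (hA a₀ ha₀ _ hc).2, zero_add, hP.br_eq_neg a₀ (br x a₀), smul_neg] at h
  exact add_neg_eq_zero.1 h.symm

theorem br_br_br_eq_smul (hP : IsPoisson mul br) (hA : IsAbelian mul br A) (ha₀ : a₀ ∈ A)
    {ε : F} (hε : br x (br x a₀) - ε • br x a₀ ∈ A) :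
    br x (br (br x a₀) a₀) = ε • br (br x a₀) a₀ := by
  rw [hP.leibniz_br, hP.br_self, add_zero, ← sub_add_cancel (br x (br x a₀)) (ε • br x a₀),
    map_add, LinearMap.add_apply, (hA _ hε _ ha₀).2, zero_add, map_smul, LinearMap.smul_apply]

theorem br_br_br_eq_zero (hP : IsPoisson mul br) (hA : IsAbelian mul br A) (ha₀ : a₀ ∈ A)
    (hxu : br x (br x a₀) ∈ A) : br x (br (br x a₀) a₀) = 0 := by
  simpa using hP.br_br_br_eq_smul hA ha₀ (ε := 0) (by simpa using hxu)

theorem mul_self_br_eq_zero (hP : IsPoisson mul br) (hA : IsAbelian mul br A) (ha₀ : a₀ ∈ A)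
    (hxa₀ : mul x a₀ ∈ A) (hxu : br x (br x a₀) ∈ A ⊔ span F {br x a₀}) :
    mul (br x a₀) (br x a₀) = 0 := by
  have hua₀ := hP.mul_br_eq_zero hA ha₀ ha₀ hxa₀
  have hux : mul (br (br x a₀) x) a₀ = 0 := by
    rw [hP.br_eq_neg, map_neg, LinearMap.neg_apply, neg_eq_zero]
    exact apply_eq_zero_of_mem_sup_span_singleton mul (fun b hb => (hA b hb a₀ ha₀).1) hua₀ hxu
  have h := hP.leibniz (br x a₀) a₀ x
  rw [hua₀, map_zero, LinearMap.zero_apply, hux, zero_add, hP.br_eq_neg a₀ x, map_neg] at h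
  exact neg_eq_zero.1 h.symm

theorem br_br_ne_zero (hP : IsPoisson mul br) (hA : IsAbelian mul br A)
    (hmax : ∀ v ∉ A, ¬ IsAbelian mul br (A ⊔ span F {v})) (ha₀ : a₀ ∈ A) (hu : br x a₀ ∉ A)
    (hxA : ∀ a ∈ A, mul x a ∈ A)
    (hxN : ∀ z ∈ A ⊔ span F {br x a₀}, br x z ∈ A ⊔ span F {br x a₀}) :
    br (br x a₀) a₀ ≠ 0 := by
  intro he
  refine hmax _ hu (hP.isAbelian_sup_span_singleton hA ?_
    (fun a ha => hP.mul_br_eq_zero hA ha₀ ha (hxA a ha)) fun a ha => ?_)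
  · exact hP.mul_self_br_eq_zero hA ha₀ (hxA a₀ ha₀)
      (hxN _ (mem_sup_right (mem_span_singleton_self _)))
  · obtain ⟨c, hc⟩ := mem_sup_span_singleton_iff.1 (hxN a (mem_sup_left ha))
    rw [hP.br_br_eq_smul hA ha₀ ha hc, he, smul_zero]

theorem br_br_mem (hP : IsPoisson mul br) (hnil : ∃ m, lcsP mul br m = ⊥)
    (hA : IsAbelian mul br A) (ha₀ : a₀ ∈ A) (he₀ : br (br x a₀) a₀ ≠ 0)
    (hxu : br x (br x a₀) ∈ A ⊔ span F {br x a₀}) : br x (br x a₀) ∈ A := by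
  obtain ⟨ε, hε⟩ := mem_sup_span_singleton_iff.1 hxu
  have hε0 : ε = 0 := eq_zero_of_isNilpotent_of_apply_sub_smul_mem (hP.isNilpotent_br hnil x)
    bot_le (by simpa using he₀) (by simp [hP.br_br_br_eq_smul hA ha₀ hε])
  simpa [hε0] using hε

theorem br_mem_of_br_br_eq_zero (hP : IsPoisson mul br) (hA : IsAbelian mul br A)
    (ha₀ : a₀ ∈ A) (he₀ : br (br x a₀) a₀ ≠ 0) {a : P} (ha : a ∈ A)
    (hxa : br x a ∈ A ⊔ span F {br x a₀}) (hua : br (br x a₀) a = 0) : br x a ∈ A := by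
  obtain ⟨c, hc⟩ := mem_sup_span_singleton_iff.1 hxa
  rw [hP.br_br_eq_smul hA ha₀ ha hc, smul_eq_zero] at hua
  simpa [hua.resolve_right he₀] using hc

theorem br_br_mem_of_mem (hP : IsPoisson mul br) (hA : IsAbelian mul br A) (ha₀ : a₀ ∈ A)
    (he₀ : br (br x a₀) a₀ ≠ 0)
    (hxN : ∀ z ∈ A ⊔ span F {br x a₀}, br x z ∈ A ⊔ span F {br x a₀})
    (hxu : br x (br x a₀) ∈ A) {a : P} (ha : a ∈ A) : br x (br x a) ∈ A := by
  obtain ⟨c, hc⟩ := mem_sup_span_singleton_iff.1 (hxN a (mem_sup_left ha))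
  have hxe₀ := hP.br_br_br_eq_zero hA ha₀ hxu
  -- `[u, [x, a]] = [[u, x], a] + [x, [u, a]] = 0`, so `[x, a] - c u` commutes with `u`
  have hux : br (br x a₀) (br x a - c • br x a₀) = 0 := by
    rw [map_sub, hP.leibniz_br, hP.br_eq_neg _ x, map_neg, LinearMap.neg_apply, (hA _ hxu _ ha).2,
      hP.br_br_eq_smul hA ha₀ ha hc, map_smul, hxe₀, map_smul, hP.br_self]
    simp
  have h := hP.br_mem_of_br_br_eq_zero hA ha₀ he₀ hc (hxN _ (mem_sup_left hc)) hux
  rw [map_sub, map_smul] at h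
  simpa using add_mem h (smul_mem _ c hxu)

theorem isAbelian_inf_comap_sup_span_singleton (hP : IsPoisson mul br)
    (hA : IsAbelian mul br A) (ha₀ : a₀ ∈ A) (hxA : ∀ a ∈ A, mul x a ∈ A)
    (hxu : br x (br x a₀) ∈ A) :
    IsAbelian mul br (A ⊓ A.comap (br x) ⊔ span F {br x a₀}) :=
  hP.isAbelian_sup_span_singleton (hA.mono inf_le_left)
    (hP.mul_self_br_eq_zero hA ha₀ (hxA a₀ ha₀) (mem_sup_left hxu))
    (fun b hb => hP.mul_br_eq_zero hA ha₀ hb.1 (hxA b hb.1))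
    fun b hb => by simpa using hP.br_br_eq_smul hA ha₀ hb.1 (c := 0) (by simpa using hb.2)

theorem mem_idealizer_inf_comap_sup_span_singleton (hP : IsPoisson mul br)
    (hxA : ∀ a ∈ A, mul x a ∈ A) {u : P} (hmxu : mul x u ∈ A) (hxu : br x u ∈ A)
    (hxxa : ∀ a ∈ A, br x (br x a) ∈ A) (hxxu : br x (br x u) ∈ A) :
    x ∈ idealizer mul br (A ⊓ A.comap (br x) ⊔ span F {u}) := by
  refine mem_idealizer_sup_span_singleton
    (fun b hb => ⟨mem_sup_left ⟨hxA b hb.1, ?_⟩, mem_sup_left ⟨hb.2, hxxa b hb.1⟩⟩)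
    ⟨mem_sup_left ⟨hmxu, ?_⟩, mem_sup_left ⟨hxu, hxxu⟩⟩
  · show br x (mul x b) ∈ A
    rw [hP.br_mul_self]
    exact hxA _ hb.2
  · show br x (mul x u) ∈ A
    rw [hP.br_mul_self]
    exact hxA _ hxu

theorem le_idealizer_inf_comap_sup_span_singleton (hP : IsPoisson mul br)
    (hA : IsAbelian mul br A) (ha₀ : a₀ ∈ A) (hxA : ∀ a ∈ A, mul x a ∈ A)
    (hxa : ∀ a ∈ A, br x a ∈ A ⊔ span F {br x a₀})
    (he₀ : br (br x a₀) a₀ ∈ A ⊓ A.comap (br x)) :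
    A ≤ idealizer mul br (A ⊓ A.comap (br x) ⊔ span F {br x a₀}) := by
  intro a ha
  refine mem_idealizer_sup_span_singleton (fun b hb => ?_) ⟨?_, ?_⟩
  · rw [(hA a ha b hb.1).1, (hA a ha b hb.1).2]
    exact ⟨zero_mem _, zero_mem _⟩
  · rw [hP.mul_comm, hP.mul_br_eq_zero hA ha₀ ha (hxA a ha)]
    exact zero_mem _
  · obtain ⟨c, hc⟩ := mem_sup_span_singleton_iff.1 (hxa a ha)
    rw [hP.br_eq_neg a, hP.br_br_eq_smul hA ha₀ ha hc]
    exact neg_mem (smul_mem _ c (mem_sup_left he₀))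

theorem exists_abelian_ideal_of_idealizer_eq [FiniteDimensional F P] (hP : IsPoisson mul br)
    (hnil : ∃ m, lcsP mul br m = ⊥) (hA : IsAbelian mul br A)
    (hmax : ∀ v ∉ A, ¬ IsAbelian mul br (A ⊔ span F {v})) (ha₀ : a₀ ∈ A) (hu : br x a₀ ∉ A)
    (hxA : ∀ a ∈ A, mul x a ∈ A) (hN : A ⊔ span F {br x a₀} = idealizer mul br A)
    (hNid : IsIdeal mul br (idealizer mul br A)) (htop : idealizer mul br A ⊔ span F {x} = ⊤) :
    ∃ I : Submodule F P, IsAbelian mul br I ∧ IsIdeal mul br I ∧ finrank F I = finrank F A := by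
  set u := br x a₀
  have hxN : ∀ z ∈ A ⊔ span F {u}, br x z ∈ A ⊔ span F {u} ∧ mul x z ∈ A ⊔ span F {u} := by
    rw [hN]
    exact fun z hz => ⟨(hNid z hz x).2.2.2, (hNid z hz x).2.1⟩
  have huN : u ∈ A ⊔ span F {u} := mem_sup_right (mem_span_singleton_self u)
  have he₀ := hP.br_br_ne_zero hA hmax ha₀ hu hxA fun z hz => (hxN z hz).1
  have hxu : br x u ∈ A := hP.br_br_mem hnil hA ha₀ he₀ (hxN u huN).1
  have hxxa : ∀ a ∈ A, br x (br x a) ∈ A := fun a ha =>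
    hP.br_br_mem_of_mem hA ha₀ he₀ (fun z hz => (hxN z hz).1) hxu ha
  have hxxu : br x (br x u) ∈ A :=
    apply_mem_of_isNilpotent (θ := br x ^ 2) ((hP.isNilpotent_br hnil x).pow_of_pos two_ne_zero)
      (fun a ha => hxxa a ha) hu (hxN _ (mem_sup_left hxu)).1
  have hmxu : mul x u ∈ A :=
    apply_mem_of_isNilpotent (hP.isNilpotent_mul hnil x) (fun a ha => hxA a ha) hu (hxN u huN).2
  set B := A ⊓ A.comap (br x)
  have he₀B : br u a₀ ∈ B := by
    refine ⟨((hN ▸ huN : u ∈ idealizer mul br A) a₀ ha₀).2, ?_⟩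
    show br x (br u a₀) ∈ A
    rw [hP.br_br_br_eq_zero hA ha₀ hxu]
    exact zero_mem _
  have hI : IsAbelian mul br (B ⊔ span F {u}) :=
    hP.isAbelian_inf_comap_sup_span_singleton hA ha₀ hxA hxu
  have huI : u ∈ B ⊔ span F {u} := mem_sup_right (mem_span_singleton_self u)
  refine ⟨B ⊔ span F {u}, hI, hP.isIdeal_of_idealizer_eq_top ?_, ?_⟩
  · refine eq_top_iff.2 (htop ▸ sup_le (hN ▸ sup_le ?_ ?_) ?_)
    · exact hP.le_idealizer_inf_comap_sup_span_singleton hA ha₀ hxA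
        (fun a ha => (hxN a (mem_sup_left ha)).1) he₀B
    · exact (span_singleton_le_iff_mem _ _).2 (hI.isSubalg.le_idealizer huI)
    · exact (span_singleton_le_iff_mem _ _).2
        (hP.mem_idealizer_inf_comap_sup_span_singleton hxA hmxu hxu hxxa hxxu)
  · rw [finrank_sup_span_singleton fun h : u ∈ B => hu h.1,
      ← finrank_sup_span_singleton fun h : a₀ ∈ B => hu h.2,
      inf_comap_sup_span_singleton_eq ha₀ fun a ha => (hxN a (mem_sup_left ha)).1]

end IsPoisson

theorem nilpotent_abelian_codim_two_ideal_general [FiniteDimensional F P]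
    (mul br : P →ₗ[F] P →ₗ[F] P)
    (hcomm : ∀ x y, mul x y = mul y x)
    (hassoc : ∀ x y z, mul (mul x y) z = mul x (mul y z))
    (hskew : ∀ x, br x x = 0)
    (hjac : ∀ x y z, br (br x y) z + br (br y z) x + br (br z x) y = 0)
    (hleib : ∀ x y z, br (mul x y) z = mul (br x z) y + mul x (br y z))
    (hnil : ∃ m, lcsP mul br m = ⊥)
    (A : Submodule F P) (hab : IsAbelian mul br A)
    (hdim : Module.finrank F A + 2 = Module.finrank F P)
    (hno : ∀ B : Submodule F P, IsSubalg mul br B → IsAbelian mul br B →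
      Module.finrank F B + 1 ≠ Module.finrank F P) :
    ∃ I : Submodule F P, IsAbelian mul br I ∧ IsIdeal mul br I ∧
      Module.finrank F I + 2 = Module.finrank F P := by
  have hP : IsPoisson mul br := ⟨hcomm, hassoc, hskew, hjac, hleib⟩
  have hmax : ∀ v ∉ A, ¬ IsAbelian mul br (A ⊔ span F {v}) := fun v hv hAv =>
    hno _ hAv.isSubalg hAv (by rw [finrank_sup_span_singleton hv]; omega)
  set N := idealizer mul br A
  have hAN : A < N := hab.isSubalg.lt_idealizer hnil fun h => by
    rw [h, finrank_top] at hdim; omega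
  by_cases hN_top : N = ⊤
  · exact ⟨A, hab, hP.isIdeal_of_idealizer_eq_top hN_top, hdim⟩
  have hNA : finrank F N = finrank F A + 1 := by
    have h₁ := finrank_lt_finrank_of_lt hAN
    have h₂ := finrank_lt_finrank_of_lt (lt_top_iff_ne_top.2 hN_top)
    rw [finrank_top] at h₂
    omega
  have hNid : IsIdeal mul br N := hP.isIdeal_of_idealizer_eq_top
    (eq_top_of_lt_of_finrank_add_one ((hP.isSubalg_idealizer A).lt_idealizer hnil hN_top)
      (by omega))
  obtain ⟨x, hx⟩ : ∃ x, x ∉ N := by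
    by_contra! h
    exact hN_top (eq_top_iff'.2 h)
  have hxA : ∀ a ∈ A, mul x a ∈ A := fun a ha =>
    hP.mul_mem_of_isIdeal_idealizer hab hmax hNid hNA x ha
  obtain ⟨a₀, ha₀, hu⟩ : ∃ a₀ ∈ A, br x a₀ ∉ A := by
    by_contra! h
    exact hx fun a ha => ⟨hxA a ha, h a ha⟩
  obtain ⟨I, hI, hI_ideal, hI_dim⟩ := hP.exists_abelian_ideal_of_idealizer_eq hnil hab hmax ha₀
    hu hxA (sup_span_singleton_eq_of_finrank_eq hAN.le (hNid a₀ (hAN.le ha₀) x).2.2.2 hu hNA)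
    hNid (eq_top_of_lt_of_finrank_add_one (A := N) (left_lt_sup.2 (by simpa using hx)) (by omega))
  exact ⟨I, hI, hI_ideal, by omega⟩

/-- A nilpotent Poisson algebra of dimension `n` (char ≠ 2) with an abelian
subalgebra of dimension `n−2` but none of dimension `n−1` has an abelian
ideal of dimension `n−2`. -/
theorem nilpotent_abelian_codim_two_ideal [FiniteDimensional F P]
    (hchar : (2 : F) ≠ 0)
    (mul br : P →ₗ[F] P →ₗ[F] P)
    (hcomm : ∀ x y, mul x y = mul y x)
    (hassoc : ∀ x y z, mul (mul x y) z = mul x (mul y z))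
    (hskew : ∀ x, br x x = 0)
    (hjac : ∀ x y z, br (br x y) z + br (br y z) x + br (br z x) y = 0)
    (hleib : ∀ x y z, br (mul x y) z = mul (br x z) y + mul x (br y z))
    (hnil : ∃ m, lcsP mul br m = ⊥)
    (A : Submodule F P) (hab : IsAbelian mul br A)
    (hdim : Module.finrank F A + 2 = Module.finrank F P)
    (hno : ∀ B : Submodule F P, IsSubalg mul br B → IsAbelian mul br B →
      Module.finrank F B + 1 ≠ Module.finrank F P) :
    ∃ I : Submodule F P, IsAbelian mul br I ∧ IsIdeal mul br I ∧
      Module.finrank F I + 2 = Module.finrank F P :=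
  nilpotent_abelian_codim_two_ideal_general mul br hcomm hassoc hskew hjac hleib hnil A hab hdim hno
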